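/- arXiv:2009.06550 — 3 statements merged into one kernel-verified Lean document; each statement's English description precedes it below -/
import Mathlib

section
/- Suppose the primal feasible set X(b) is nonempty and pointed, i.e., its lineality space is trivial: {x ∈ C : A x ∈ −K} ∩ (−{x ∈ C : A x ∈ −K}) = {0}. Then: (1) X(b) is a bounded set if and only if there exists y ∈ relint K* with A* y ∈ relint C*; (2) exactly one of the following two statements holds: either there exists a nonzero x ∈ C with A x ∈ −K, or there exists y ∈ relint K* with A* y ∈ relint C*. -/
open RealInnerProductSpace Set Pointwise

variable {E E' : Type*}
  [NormedAddCommGroup E] [InnerProductSpace ℝ E] [FiniteDimensional ℝ E]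
  [NormedAddCommGroup E'] [InnerProductSpace ℝ E'] [FiniteDimensional ℝ E']

/-- A nonempty closed convex cone containing `0`. -/
structure IsClosedConvexCone {F : Type*} [NormedAddCommGroup F] [InnerProductSpace ℝ F]
    (K : Set F) : Prop where
  closed : IsClosed K
  convex : Convex ℝ K
  smul_mem : ∀ ⦃x⦄, x ∈ K → ∀ ⦃t : ℝ⦄, 0 ≤ t → t • x ∈ K
  zero_mem : (0 : F) ∈ K

/-- The dual cone `S* = {y : ⟨x,y⟩ ≥ 0 ∀ x ∈ S}`. -/
def dualCone {F : Type*} [NormedAddCommGroup F] [InnerProductSpace ℝ F] (S : Set F) : Set F :=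
  {y | ∀ x ∈ S, 0 ≤ ⟪x, y⟫}

/-- The polar cone `S° = {y : ⟨x,y⟩ ≤ 0 ∀ x ∈ S}`. -/
def polarCone {F : Type*} [NormedAddCommGroup F] [InnerProductSpace ℝ F] (S : Set F) : Set F :=
  {y | ∀ x ∈ S, ⟪x, y⟫ ≤ 0}

/-- Primal feasible set `X(b) = {x ∈ C : b - A x ∈ K}`. -/
def Xfeas (A : E →ₗ[ℝ] E') (K : Set E') (C : Set E) (b : E') : Set E :=
  {x | x ∈ C ∧ b - A x ∈ K}

/-- Dual feasible set `Y(c) = {y ∈ K* : A* y - c ∈ C*}`. -/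
def Yfeas (A : E →ₗ[ℝ] E') (K : Set E') (C : Set E) (c : E) : Set E' :=
  {y | y ∈ dualCone K ∧ LinearMap.adjoint A y - c ∈ dualCone C}

/-- Primal optimal value `P* = sup {⟨c,x⟩ : x ∈ X(b)}`. -/
noncomputable def Pval (A : E →ₗ[ℝ] E') (K : Set E') (C : Set E) (b : E') (c : E) : ℝ :=
  sSup ((fun x => ⟪c, x⟫) '' Xfeas A K C b)

/-- Dual optimal value `D* = inf {⟨b,y⟩ : y ∈ Y(c)}`. -/
noncomputable def Dval (A : E →ₗ[ℝ] E') (K : Set E') (C : Set E) (b : E') (c : E) : ℝ :=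
  sInf ((fun y => ⟪b, y⟫) '' Yfeas A K C c)

/-- Recession cone of the primal feasible region: `{x ∈ C : A x ∈ -K}`. -/
def recXSet (A : E →ₗ[ℝ] E') (K : Set E') (C : Set E) : Set E :=
  {x | x ∈ C ∧ A x ∈ -K}

/-- Recession cone of the dual feasible region: `{y ∈ K* : A* y ∈ C*}`. -/
def recYSet (A : E →ₗ[ℝ] E') (K : Set E') (C : Set E) : Set E' :=
  {y | y ∈ dualCone K ∧ LinearMap.adjoint A y ∈ dualCone C}

/-- `X(b)` is almost feasible. -/
def AlmostFeasX (A : E →ₗ[ℝ] E') (K : Set E') (C : Set E) (b : E') : Prop :=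
  ∀ ε : ℝ, 0 < ε → ∃ bε : E', ‖bε‖ ≤ ε ∧ (Xfeas A K C (b + bε)).Nonempty

/-- `Y(c)` is almost feasible. -/
def AlmostFeasY (A : E →ₗ[ℝ] E') (K : Set E') (C : Set E) (c : E) : Prop :=
  ∀ ε : ℝ, 0 < ε → ∃ cε : E, ‖cε‖ ≤ ε ∧ (Yfeas A K C (c + cε)).Nonempty

/-!
Write `R = {x ∈ C : A x ∈ -K}`; both conditions in (1) are equivalent to `R = {0}`, and (2) is
then a rephrasing of the second equivalence.

If `R = {0}`, then `-A u ∉ K` for `u` on the compact set of unit vectors of `C`, so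
`dist(-A u, K) ≥ δ > 0` there; since `‖x‖⁻¹ (b - A x) ∈ K` for `x ∈ X(b)`, this gives
`‖x‖ ≤ ‖b‖ / δ`. Conversely a nonzero `d ∈ R` yields the ray `x₀ + t d ⊆ X(b)`.

If `R = {0}`, the convex cone `S = C* - A* K*` has dual cone `R = {0}`, so by the bipolar theorem it
is dense, hence (having nonempty interior) all of `E`. Writing `A* y₀ - z₀ = z₁ - A* y₁ ∈ S` for
relative interior points `y₀` of `K*` and `z₀` of `C*` gives `A* (y₀ + y₁) = z₀ + z₁`, and adding an
element of a cone to a relative interior point stays in the relative interior.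

Conversely, if `y ∈ relint K*` and `A* y ∈ relint C*`, every `x ∈ R` has `⟪A* y, x⟫ = 0`. A linear
functional that is nonnegative on a convex set and vanishes at a relative interior point vanishes on
the whole set, so `-x ∈ C** = C` and `A x ∈ K** = K`, i.e. `x ∈ R ∩ -R = {0}`.
-/

section ConvexGeometry

variable {F : Type*} [NormedAddCommGroup F] [NormedSpace ℝ F] {s : Set F} {x : F}

theorem mem_intrinsicInterior_iff_ball :
    x ∈ intrinsicInterior ℝ s ↔
      x ∈ affineSpan ℝ s ∧ ∃ ε > 0, ∀ z ∈ affineSpan ℝ s, dist z x < ε → z ∈ s := by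
  constructor
  · rintro ⟨y, hy, rfl⟩
    obtain ⟨ε, hε, hball⟩ := Metric.mem_nhds_iff.mp (mem_interior_iff_mem_nhds.mp hy)
    exact ⟨y.2, ε, hε, fun z hz hzy => hball (a := ⟨z, hz⟩) hzy⟩
  · rintro ⟨hx, ε, hε, hball⟩
    refine ⟨⟨x, hx⟩, mem_interior_iff_mem_nhds.mpr (Metric.mem_nhds_iff.mpr ⟨ε, hε, ?_⟩), rfl⟩
    exact fun z hz => hball z z.2 hz

theorem exists_add_smul_sub_mem_of_mem_intrinsicInterior {z : F}
    (hx : x ∈ intrinsicInterior ℝ s) (hz : z ∈ s) :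
    ∃ t : ℝ, 0 < t ∧ x + t • (x - z) ∈ s := by
  obtain ⟨hxA, ε, hε, hball⟩ := mem_intrinsicInterior_iff_ball.mp hx
  obtain ⟨t, ht, htε⟩ : ∃ t > 0, t * (‖x - z‖ + 1) = ε / 2 :=
    ⟨ε / (2 * (‖x - z‖ + 1)), by positivity, by field_simp⟩
  refine ⟨t, ht, hball _ ?_ ?_⟩
  · simpa [vsub_eq_sub, vadd_eq_add, add_comm] using
      (affineSpan ℝ s).smul_vsub_vadd_mem t hxA (subset_affineSpan ℝ s hz) hxA
  · rw [dist_eq_norm, add_sub_cancel_left, norm_smul, Real.norm_of_nonneg ht.le]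
    calc t * ‖x - z‖ < t * (‖x - z‖ + 1) := by gcongr; linarith
      _ = ε / 2 := htε
      _ < ε := half_lt_self hε

theorem add_mem_intrinsicInterior_of_add_mem {y : F} (h0 : (0 : F) ∈ s)
    (hadd : ∀ u ∈ s, ∀ v ∈ s, u + v ∈ s) (hx : x ∈ intrinsicInterior ℝ s) (hy : y ∈ s) :
    x + y ∈ intrinsicInterior ℝ s := by
  obtain ⟨hxA, ε, hε, hball⟩ := mem_intrinsicInterior_iff_ball.mp hx
  have hy₀ : y ∈ (affineSpan ℝ s).direction := by
    simpa using
      AffineSubspace.vsub_mem_direction (subset_affineSpan ℝ s hy) (subset_affineSpan ℝ s h0)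
  refine mem_intrinsicInterior_iff_ball.mpr
    ⟨by simpa [add_comm] using AffineSubspace.vadd_mem_of_mem_direction hy₀ hxA, ε, hε,
      fun z hz hzd => ?_⟩
  have hzyA : z - y ∈ affineSpan ℝ s := by
    simpa [sub_eq_neg_add] using AffineSubspace.vadd_mem_of_mem_direction (neg_mem hy₀) hz
  have hzy : z - y ∈ s := hball _ hzyA (by rwa [dist_eq_norm, sub_sub, add_comm y, ← dist_eq_norm])
  simpa using hadd _ hzy y hy


theorem Convex.eq_univ_of_dense_of_add_mem [FiniteDimensional ℝ F] (hconv : Convex ℝ s)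
    (hadd : ∀ u ∈ s, ∀ v ∈ s, u + v ∈ s) (hdense : Dense s) : s = univ := by
  have hspan : affineSpan ℝ s = ⊤ := eq_top_iff.mpr fun p _ =>
    closure_minimal (subset_affineSpan ℝ s) (affineSpan ℝ s).closed_of_finiteDimensional (hdense p)
  obtain ⟨w, hw⟩ := (hconv.interior_nonempty_iff_affineSpan_eq_top).mpr hspan
  obtain ⟨ε, hε, hball⟩ := Metric.isOpen_iff.mp isOpen_interior w hw
  refine eq_univ_of_forall fun p => ?_
  obtain ⟨q, hq, hqs⟩ := Metric.dense_iff.mp hdense (p - w) ε hε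
  have hpq : p - q ∈ s := interior_subset <| hball <| by
    rw [Metric.mem_ball, dist_eq_norm, sub_sub, add_comm, ← sub_sub, ← dist_eq_norm, dist_comm]
    exact hq
  simpa using hadd q hqs (p - q) hpq

end ConvexGeometry

section Cones

variable {F : Type*} [NormedAddCommGroup F] [InnerProductSpace ℝ F] {K S T : Set F}

theorem IsClosedConvexCone.add_mem (hK : IsClosedConvexCone K) {u v : F} (hu : u ∈ K)
    (hv : v ∈ K) : u + v ∈ K := by
  convert hK.smul_mem (hK.convex hu hv one_half_pos.le one_half_pos.le (add_halves 1))
    zero_le_two using 1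
  module

theorem isClosedConvexCone_closure (hconv : Convex ℝ S)
    (hsmul : ∀ x ∈ S, ∀ t : ℝ, 0 ≤ t → t • x ∈ S) (h0 : (0 : F) ∈ S) :
    IsClosedConvexCone (closure S) where
  closed := isClosed_closure
  convex := hconv.closure
  smul_mem _ hx t ht := (MapsTo.closure (fun _ hy => hsmul _ hy t ht) (continuous_const_smul t)) hx
  zero_mem := subset_closure h0

theorem zero_mem_dualCone (S : Set F) : (0 : F) ∈ dualCone S := fun _ _ => by simp

theorem add_mem_dualCone {y z : F} (hy : y ∈ dualCone S) (hz : z ∈ dualCone S) :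
    y + z ∈ dualCone S := fun x hx => by
  rw [inner_add_right]; exact add_nonneg (hy x hx) (hz x hx)

theorem smul_mem_dualCone {y : F} (hy : y ∈ dualCone S) {t : ℝ} (ht : 0 ≤ t) :
    t • y ∈ dualCone S := fun x hx => by
  rw [real_inner_smul_right]; exact mul_nonneg ht (hy x hx)

theorem convex_dualCone (S : Set F) : Convex ℝ (dualCone S) := fun _ hy _ hz _ _ ha hb _ =>
  add_mem_dualCone (smul_mem_dualCone hy ha) (smul_mem_dualCone hz hb)

theorem dualCone_anti (h : S ⊆ T) : dualCone T ⊆ dualCone S := fun _ hy x hx => hy x (h hx)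

theorem dualCone_zero : dualCone ({0} : Set F) = univ := by
  ext; simp [dualCone]

theorem IsClosedConvexCone.dualCone_dualCone [CompleteSpace F] (hK : IsClosedConvexCone K) :
    dualCone (dualCone K) = K :=
  congrArg SetLike.coe <| ProperCone.innerDual_innerDual
    { carrier := K
      add_mem' := hK.add_mem
      zero_mem' := hK.zero_mem
      smul_mem' := fun c _ hx => hK.smul_mem hx c.2
      isClosed' := hK.closed }

theorem IsClosedConvexCone.eq_univ_of_dualCone_subset_zero [CompleteSpace F]
    (hK : IsClosedConvexCone K) (h : dualCone K ⊆ {0}) : K = univ := by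
  rw [← hK.dualCone_dualCone, eq_univ_iff_forall]
  exact fun y => dualCone_anti h (dualCone_zero (F := F) ▸ mem_univ y)

theorem add_mem_intrinsicInterior_dualCone {x y : F} (hx : x ∈ intrinsicInterior ℝ (dualCone S))
    (hy : y ∈ dualCone S) : x + y ∈ intrinsicInterior ℝ (dualCone S) :=
  add_mem_intrinsicInterior_of_add_mem (zero_mem_dualCone S)
    (fun _ hu _ hv => add_mem_dualCone hu hv) hx hy

theorem neg_mem_dualCone_of_inner_eq_zero {x w : F} (hx : x ∈ dualCone S)
    (hw : w ∈ intrinsicInterior ℝ S) (hxw : ⟪w, x⟫ = 0) : -x ∈ dualCone S := by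
  intro z hz
  obtain ⟨t, ht, hmem⟩ := exists_add_smul_sub_mem_of_mem_intrinsicInterior hw hz
  have h := hx _ hmem
  rw [inner_add_left, real_inner_smul_left, inner_sub_left, hxw] at h
  rw [inner_neg_right]
  nlinarith

end Cones

section Recession

variable {V W : Type*} [NormedAddCommGroup V] [InnerProductSpace ℝ V]
  [NormedAddCommGroup W] [InnerProductSpace ℝ W] {A : V →ₗ[ℝ] W} {K : Set W} {C : Set V}

theorem recXSet_subset_zero_of_isBounded (hK : IsClosedConvexCone K) (hC : IsClosedConvexCone C)
    {b : W} (hX : (Xfeas A K C b).Nonempty) (hbdd : Bornology.IsBounded (Xfeas A K C b)) :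
    recXSet A K C ⊆ {0} := by
  obtain ⟨x₀, hx₀C, hx₀K⟩ := hX
  obtain ⟨M, hM⟩ := isBounded_iff_forall_norm_le.mp hbdd
  rintro d ⟨hdC, hdK⟩
  have hray : ∀ t : ℝ, 0 ≤ t → x₀ + t • d ∈ Xfeas A K C b := fun t ht => by
    refine ⟨hC.add_mem hx₀C (hC.smul_mem hdC ht), ?_⟩
    rw [map_add, map_smul, show b - (A x₀ + t • A d) = (b - A x₀) + t • -A d by module]
    exact hK.add_mem hx₀K (hK.smul_mem hdK ht)
  by_contra hd
  have hdpos : 0 < ‖d‖ := norm_pos_iff.mpr hd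
  have hM₀ : ‖x₀‖ ≤ M := hM x₀ ⟨hx₀C, hx₀K⟩
  set t := (2 * M + 1) / ‖d‖
  have ht : 0 ≤ t := div_nonneg (by linarith [norm_nonneg x₀]) (norm_nonneg d)
  have hfar : ‖t • d‖ = 2 * M + 1 := by
    rw [norm_smul, Real.norm_of_nonneg ht, div_mul_cancel₀ _ hdpos.ne']
  have htri := norm_sub_le (x₀ + t • d) x₀
  rw [add_sub_cancel_left, hfar] at htri
  linarith [hM _ (hray t ht)]

theorem isBounded_Xfeas_of_recXSet_subset_zero [FiniteDimensional ℝ V]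
    (hK : IsClosedConvexCone K) (hC : IsClosedConvexCone C) (hR : recXSet A K C ⊆ {0}) (b : W) :
    Bornology.IsBounded (Xfeas A K C b) := by
  set T := Metric.sphere (0 : V) 1 ∩ C
  have hgap : ∀ u ∈ T, 0 < Metric.infDist (-A u) K := by
    rintro u ⟨hu1, huC⟩
    refine (hK.closed.notMem_iff_infDist_pos ⟨0, hK.zero_mem⟩).mp fun huK => ?_
    have : u = 0 := hR ⟨huC, Set.mem_neg.mpr huK⟩
    simp [this] at hu1
  obtain ⟨δ, hδ, hδT⟩ := ((isCompact_sphere 0 1).inter_right hC.closed).exists_forall_le'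
    ((Metric.continuous_infDist_pt K).comp A.continuous_of_finiteDimensional.neg).continuousOn hgap
  refine isBounded_iff_forall_norm_le.mpr ⟨‖b‖ / δ, fun x ⟨hxC, hxK⟩ => ?_⟩
  rcases eq_or_ne x 0 with rfl | hx
  · simp only [norm_zero]; positivity
  have hxpos : 0 < ‖x‖ := norm_pos_iff.mpr hx
  have hu : ‖x‖⁻¹ • x ∈ T := ⟨by simp [norm_smul, hxpos.ne'], hC.smul_mem hxC (by positivity)⟩
  have hδx : δ ≤ ‖b‖ / ‖x‖ := calc
    δ ≤ Metric.infDist (-A (‖x‖⁻¹ • x)) K := hδT _ hu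
    _ ≤ dist (-A (‖x‖⁻¹ • x)) (‖x‖⁻¹ • (b - A x)) :=
      Metric.infDist_le_dist_of_mem (hK.smul_mem hxK (by positivity))
    _ = ‖b‖ / ‖x‖ := by
      rw [dist_eq_norm, map_smul, show -(‖x‖⁻¹ • A x) - ‖x‖⁻¹ • (b - A x) = -(‖x‖⁻¹ • b) by module,
        norm_neg, norm_smul, norm_inv, norm_norm, inv_mul_eq_div]
  rwa [le_div_iff₀ hxpos, mul_comm, ← le_div_iff₀ hδ] at hδx

end Recession

section Duality

variable {A : E →ₗ[ℝ] E'} {K : Set E'} {C : Set E}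

def RelIntDualFeasible (A : E →ₗ[ℝ] E') (K : Set E') (C : Set E) : Prop :=
  ∃ y ∈ intrinsicInterior ℝ (dualCone K), LinearMap.adjoint A y ∈ intrinsicInterior ℝ (dualCone C)

theorem dualCone_sub_adjoint_image_subset_recXSet (hK : IsClosedConvexCone K)
    (hC : IsClosedConvexCone C) :
    dualCone (dualCone C - LinearMap.adjoint A '' dualCone K) ⊆ recXSet A K C := by
  intro x hx
  constructor
  · rw [← hC.dualCone_dualCone]
    intro z hz
    simpa using hx z ⟨z, hz, 0, ⟨0, zero_mem_dualCone K, map_zero _⟩, sub_zero z⟩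
  · rw [Set.mem_neg, ← hK.dualCone_dualCone]
    intro y hy
    have h : 0 ≤ ⟪0 - LinearMap.adjoint A y, x⟫ :=
      hx _ ⟨0, zero_mem_dualCone C, _, ⟨y, hy, rfl⟩, rfl⟩
    rwa [zero_sub, inner_neg_left, LinearMap.adjoint_inner_left, ← inner_neg_right] at h

theorem dualCone_sub_adjoint_image_eq_univ (hK : IsClosedConvexCone K)
    (hC : IsClosedConvexCone C) (hR : recXSet A K C ⊆ {0}) :
    dualCone C - LinearMap.adjoint A '' dualCone K = univ := by
  set S := dualCone C - LinearMap.adjoint A '' dualCone K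
  have hadd : ∀ u ∈ S, ∀ v ∈ S, u + v ∈ S := by
    rintro _ ⟨z₁, hz₁, _, ⟨y₁, hy₁, rfl⟩, rfl⟩ _ ⟨z₂, hz₂, _, ⟨y₂, hy₂, rfl⟩, rfl⟩
    exact ⟨z₁ + z₂, add_mem_dualCone hz₁ hz₂, _, ⟨y₁ + y₂, add_mem_dualCone hy₁ hy₂, rfl⟩,
      by rw [map_add, sub_add_sub_comm]⟩
  have hsmul : ∀ u ∈ S, ∀ t : ℝ, 0 ≤ t → t • u ∈ S := by
    rintro _ ⟨z, hz, _, ⟨y, hy, rfl⟩, rfl⟩ t ht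
    exact ⟨t • z, smul_mem_dualCone hz ht, _, ⟨t • y, smul_mem_dualCone hy ht, rfl⟩,
      by rw [map_smul, smul_sub]⟩
  have hconv : Convex ℝ S := fun u hu v hv a b ha hb _ =>
    hadd _ (hsmul u hu a ha) _ (hsmul v hv b hb)
  have h0 : (0 : E) ∈ S :=
    ⟨0, zero_mem_dualCone C, 0, ⟨0, zero_mem_dualCone K, map_zero _⟩, sub_zero 0⟩
  refine hconv.eq_univ_of_dense_of_add_mem hadd <| dense_iff_closure_eq.mpr <|
    (isClosedConvexCone_closure hconv hsmul h0).eq_univ_of_dualCone_subset_zero ?_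
  exact (dualCone_anti subset_closure).trans
    ((dualCone_sub_adjoint_image_subset_recXSet hK hC).trans hR)

theorem relIntDualFeasible_of_recXSet_subset_zero (hK : IsClosedConvexCone K)
    (hC : IsClosedConvexCone C) (hR : recXSet A K C ⊆ {0}) : RelIntDualFeasible A K C := by
  obtain ⟨y₀, hy₀⟩ := Set.Nonempty.intrinsicInterior (convex_dualCone K) ⟨0, zero_mem_dualCone K⟩
  obtain ⟨z₀, hz₀⟩ := Set.Nonempty.intrinsicInterior (convex_dualCone C) ⟨0, zero_mem_dualCone C⟩
  obtain ⟨z₁, hz₁, _, ⟨y₁, hy₁, rfl⟩, hdecomp⟩ :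
      LinearMap.adjoint A y₀ - z₀ ∈ dualCone C - LinearMap.adjoint A '' dualCone K :=
    dualCone_sub_adjoint_image_eq_univ hK hC hR ▸ mem_univ _
  beta_reduce at hdecomp
  have hAy : LinearMap.adjoint A (y₀ + y₁) = z₀ + z₁ := by
    rw [map_add, sub_eq_iff_eq_add.mp hdecomp.symm]; abel
  exact ⟨y₀ + y₁, add_mem_intrinsicInterior_dualCone hy₀ hy₁,
    hAy ▸ add_mem_intrinsicInterior_dualCone hz₀ hz₁⟩

theorem recXSet_subset_zero_of_relIntDualFeasible (hK : IsClosedConvexCone K)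
    (hC : IsClosedConvexCone C) (hpointed : recXSet A K C ∩ -recXSet A K C = {0})
    (h : RelIntDualFeasible A K C) : recXSet A K C ⊆ {0} := by
  obtain ⟨y, hy, hAy⟩ := h
  rintro x ⟨hxC, hAx⟩
  have hAx' : -A x ∈ K := hAx
  have hxy : ⟪LinearMap.adjoint A y, x⟫ = 0 := by
    have h₁ : 0 ≤ ⟪x, LinearMap.adjoint A y⟫ := intrinsicInterior_subset hAy x hxC
    have h₂ : 0 ≤ ⟪-A x, y⟫ := intrinsicInterior_subset hy _ hAx'
    rw [LinearMap.adjoint_inner_right] at h₁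
    rw [inner_neg_left] at h₂
    rw [LinearMap.adjoint_inner_left, real_inner_comm]
    linarith
  have hnegC : -x ∈ C := by
    rw [← hC.dualCone_dualCone] at hxC ⊢
    exact neg_mem_dualCone_of_inner_eq_zero hxC hAy hxy
  have hAxK : A x ∈ K := by
    rw [← hK.dualCone_dualCone] at hAx' ⊢
    simpa using neg_mem_dualCone_of_inner_eq_zero hAx' hy
      (by rw [inner_neg_right, ← LinearMap.adjoint_inner_left, hxy, neg_zero])
  rw [← hpointed]
  exact ⟨⟨hxC, hAx⟩, hnegC, by simpa using hAxK⟩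

end Duality

theorem stmt11 (A : E →ₗ[ℝ] E') (K : Set E') (C : Set E)
    (hK : IsClosedConvexCone K) (hC : IsClosedConvexCone C) (b : E')
    (hXne : (Xfeas A K C b).Nonempty)
    (hpointed : recXSet A K C ∩ (-(recXSet A K C)) = {0}) :
    (Bornology.IsBounded (Xfeas A K C b) ↔
      ∃ y ∈ intrinsicInterior ℝ (dualCone K),
        LinearMap.adjoint A y ∈ intrinsicInterior ℝ (dualCone C)) ∧
    Xor' (∃ x ∈ C, x ≠ 0 ∧ A x ∈ -K)
      (∃ y ∈ intrinsicInterior ℝ (dualCone K),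
        LinearMap.adjoint A y ∈ intrinsicInterior ℝ (dualCone C)) := by
  have hrelint : RelIntDualFeasible A K C ↔ recXSet A K C ⊆ {0} :=
    ⟨recXSet_subset_zero_of_relIntDualFeasible hK hC hpointed,
      relIntDualFeasible_of_recXSet_subset_zero hK hC⟩
  have hbdd : Bornology.IsBounded (Xfeas A K C b) ↔ recXSet A K C ⊆ {0} :=
    ⟨recXSet_subset_zero_of_isBounded hK hC hXne,
      fun hR => isBounded_Xfeas_of_recXSet_subset_zero hK hC hR b⟩
  have hnonzero : (∃ x ∈ C, x ≠ 0 ∧ A x ∈ -K) ↔ ¬RelIntDualFeasible A K C := by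
    rw [hrelint, Set.not_subset]
    exact ⟨fun ⟨x, hxC, hx, hAx⟩ => ⟨x, ⟨hxC, hAx⟩, hx⟩,
      fun ⟨x, ⟨hxC, hAx⟩, hx⟩ => ⟨x, hxC, hx, hAx⟩⟩
  rw [hnonzero]
  exact ⟨hbdd.trans hrelint.symm, xor_not_left.mpr Iff.rfl⟩
end

section
/- If there exists x ∈ relint C with −A x ∈ relint K (i.e., the homogeneous system X(0) = {x ∈ C : A x ∈ −K} is strictly feasible), then for every b in the linear span of K there exists x ∈ relint C with b − A x ∈ relint K (i.e., X(b) is strictly feasible). -/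
/-!
Let `x₀ ∈ relint C` with `u := -A x₀ ∈ relint K`. Since `relint K` is open in `span K`, which
contains `b`, the point `u + ε • b` stays in `relint K` for small `ε > 0`. Relative interiors of
cones are invariant under positive scaling, so `x := ε⁻¹ • x₀` lies in `relint C` and
`b - A x = ε⁻¹ • (u + ε • b)` lies in `relint K`.
-/

open RealInnerProductSpace Set Pointwise

variable {E E' : Type*}
  [NormedAddCommGroup E] [InnerProductSpace ℝ E] [FiniteDimensional ℝ E]
  [NormedAddCommGroup E'] [InnerProductSpace ℝ E'] [FiniteDimensional ℝ E']

open Filter Topology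

section IntrinsicInterior

variable {V : Type*} [AddCommGroup V] [Module ℝ V]

theorem span_le_direction_affineSpan_of_zero_mem {s : Set V} (h0 : (0 : V) ∈ s) :
    Submodule.span ℝ s ≤ (affineSpan ℝ s).direction := by
  rw [direction_affineSpan]
  exact Submodule.span_le.2 fun x hx => by simpa using vsub_mem_vectorSpan ℝ hx h0

variable [TopologicalSpace V]

theorem intrinsicInterior_smul_set [ContinuousConstSMul ℝ V] {t : ℝ} (ht : t ≠ 0) (s : Set V) :
    intrinsicInterior ℝ (t • s) = t • intrinsicInterior ℝ s := by
  let φ := ContinuousLinearEquiv.smulLeft (R₁ := ℝ) (M₁ := V) (Units.mk0 t ht)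
  have hφ : ⇑φ.toContinuousAffineEquiv = (t • ·) := rfl
  simpa only [hφ, Set.image_smul] using φ.toContinuousAffineEquiv.intrinsicInterior_image s

theorem smul_mem_intrinsicInterior_of_smul_mem [ContinuousConstSMul ℝ V] {s : Set V}
    (hs : ∀ ⦃x⦄, x ∈ s → ∀ ⦃t : ℝ⦄, 0 < t → t • x ∈ s) {x : V} (hx : x ∈ intrinsicInterior ℝ s)
    {t : ℝ} (ht : 0 < t) : t • x ∈ intrinsicInterior ℝ s := by
  have hts : t • s = s := by
    refine (smul_set_subset_iff.2 fun y hy => hs hy ht).antisymm fun y hy => ?_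
    exact ⟨t⁻¹ • y, hs hy (inv_pos.2 ht), smul_inv_smul₀ ht.ne' y⟩
  rw [← hts, intrinsicInterior_smul_set ht.ne']
  exact smul_mem_smul_set (hts.symm ▸ hx)

theorem eventually_add_smul_mem_intrinsicInterior [IsTopologicalAddGroup V] [ContinuousSMul ℝ V]
    {s : Set V} {u v : V} (hu : u ∈ intrinsicInterior ℝ s) (hv : v ∈ (affineSpan ℝ s).direction) :
    ∀ᶠ ε in 𝓝 (0 : ℝ), u + ε • v ∈ intrinsicInterior ℝ s := by
  obtain ⟨y, hy, rfl⟩ := hu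
  let γ : ℝ → affineSpan ℝ s := fun ε => ⟨y + ε • v, by
    simpa only [vadd_eq_add, add_comm] using
      AffineSubspace.vadd_mem_of_mem_direction (Submodule.smul_mem _ ε hv) y.2⟩
  have hγ : Tendsto γ (𝓝 0) (𝓝 y) := by
    simpa [γ] using (show Continuous γ by fun_prop).tendsto 0
  filter_upwards [hγ (isOpen_interior.mem_nhds hy)] with ε hε
  exact ⟨γ ε, hε, rfl⟩

end IntrinsicInterior

theorem stmt16 (A : E →ₗ[ℝ] E') (K : Set E') (C : Set E)
    (hK : IsClosedConvexCone K) (hC : IsClosedConvexCone C)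
    (hstrict : ∃ x ∈ intrinsicInterior ℝ C, -A x ∈ intrinsicInterior ℝ K) :
    ∀ b ∈ Submodule.span ℝ K,
      ∃ x ∈ intrinsicInterior ℝ C, b - A x ∈ intrinsicInterior ℝ K := by
  intro b hb
  obtain ⟨x₀, hx₀, hu⟩ := hstrict
  have hb_dir := span_le_direction_affineSpan_of_zero_mem hK.zero_mem hb
  obtain ⟨ε, hεK, hε⟩ := ((eventually_add_smul_mem_intrinsicInterior hu hb_dir).filter_mono
    nhdsWithin_le_nhds |>.and self_mem_nhdsWithin).exists (f := 𝓝[>] (0 : ℝ))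
  have hε' : 0 < ε⁻¹ := inv_pos.2 hε
  refine ⟨ε⁻¹ • x₀,
    smul_mem_intrinsicInterior_of_smul_mem (fun _ hx _ ht => hC.smul_mem hx ht.le) hx₀ hε', ?_⟩
  have hrescale : b - A (ε⁻¹ • x₀) = ε⁻¹ • (-A x₀ + ε • b) := by
    rw [smul_add, smul_smul, inv_mul_cancel₀ hε.ne', one_smul, map_smul, smul_neg]
    abel
  rw [hrescale]
  exact smul_mem_intrinsicInterior_of_smul_mem (fun _ hx _ ht => hK.smul_mem hx ht.le) hεK hε'
end

section
/- Let S ⊆ E be a nonempty closed convex set, let rec S = {r ∈ E : x + μ r ∈ S for all x ∈ S and μ ≥ 0} be its recession cone, and let dom σ_S = {c ∈ E : the set {⟨c,x⟩ : x ∈ S} is bounded above} be its barrier cone. Then relint(dom σ_S) = relint((rec S)°) ⊆ dom σ_S ⊆ (rec S)° = (relint(rec S))° = cl(dom σ_S). -/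
open RealInnerProductSpace Set Pointwise

variable {E E' : Type*}
  [NormedAddCommGroup E] [InnerProductSpace ℝ E] [FiniteDimensional ℝ E]
  [NormedAddCommGroup E'] [InnerProductSpace ℝ E'] [FiniteDimensional ℝ E']

/-!
Write `B` for the barrier cone and `K` for the recession cone of `S`. If `⟪c, r⟫ > 0` for some
`r ∈ K`, then `⟪c, ·⟫` is unbounded on the half-line `x + μ r ⊆ S`, so `B ⊆ K°`. Conversely, a
half-line `x + μ r` leaving `S` is cut off by a hyperplane separating one of its points from `S`;
its normal `c` lies in `B` and has `⟪c, r⟫ > 0`, so `B° ⊆ K`. Separating a point of `K°` outside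
the closed cone `cl B` from `cl B` then contradicts `B° ⊆ K`, whence `cl B = K°`. The statements on
relative interiors follow from `relint (cl C) = relint C` and `cl (relint C) = cl C` for convex
`C`, which an affine isometry from the direction of `affineSpan C` reduces to the corresponding
facts about interiors of convex sets with nonempty interior.
-/

section IntrinsicInterior

variable {V W : Type*} [NormedAddCommGroup V] [NormedSpace ℝ V]
  [NormedAddCommGroup W] [NormedSpace ℝ W]

theorem intrinsicInterior_eq_interior_of_affineSpan_eq_top {s : Set V}
    (h : affineSpan ℝ s = ⊤) : intrinsicInterior ℝ s = interior s := by
  have huniv : (affineSpan ℝ s : Set V) = univ := by rw [h]; rfl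
  have hopen : IsOpenMap ((↑) : affineSpan ℝ s → V) :=
    (huniv ▸ isOpen_univ : IsOpen (affineSpan ℝ s : Set V)).isOpenMap_subtype_val
  rw [intrinsicInterior, ← hopen.preimage_interior_eq_interior_preimage continuous_subtype_val,
    image_preimage_eq_inter_range, Subtype.range_coe, huniv, inter_univ]

theorem AffineIsometry.intrinsicInterior_image_of_affineSpan_eq_top (ψ : W →ᵃⁱ[ℝ] V) {w : Set W}
    (h : affineSpan ℝ w = ⊤) : intrinsicInterior ℝ (ψ '' w) = ψ '' interior w := by
  rw [ψ.intrinsicInterior_image, intrinsicInterior_eq_interior_of_affineSpan_eq_top h]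

theorem exists_affineIsometry_image_preimage_eq_and_affineSpan_eq_top {s : Set V}
    (hs : s.Nonempty) : ∃ ψ : (affineSpan ℝ s).direction →ᵃⁱ[ℝ] V,
      ψ '' (ψ ⁻¹' s) = s ∧ affineSpan ℝ (ψ ⁻¹' s) = ⊤ := by
  obtain ⟨p, hp⟩ := hs
  have : Nonempty s := ⟨⟨p, hp⟩⟩
  let e := (AffineIsometryEquiv.constVSub ℝ (⟨p, subset_affineSpan ℝ s hp⟩ : affineSpan ℝ s)).symm
  refine ⟨(affineSpan ℝ s).subtypeₐᵢ.comp e.toAffineIsometry, ?_, ?_⟩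
  · refine image_preimage_eq_of_subset fun x hx => ?_
    obtain ⟨v, hv⟩ := e.surjective ⟨x, subset_affineSpan ℝ s hx⟩
    exact ⟨v, congrArg Subtype.val hv⟩
  · change affineSpan ℝ (e ⁻¹' ((↑) ⁻¹' s)) = ⊤
    rw [← AffineIsometryEquiv.coe_toAffineEquiv, ← AffineSubspace.comap_span,
      affineSpan_coe_preimage_eq_top, AffineSubspace.comap_top]

variable [FiniteDimensional ℝ V] {s : Set V}

theorem Convex.intrinsicInterior_closure (hs : Convex ℝ s) :
    intrinsicInterior ℝ (closure s) = intrinsicInterior ℝ s := by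
  rcases s.eq_empty_or_nonempty with rfl | hne
  · simp
  obtain ⟨ψ, hψs, hspan⟩ := exists_affineIsometry_image_preimage_eq_and_affineSpan_eq_top hne
  have hw : Convex ℝ (ψ ⁻¹' s) := hs.affine_preimage ψ.toAffineMap
  have hspan' : affineSpan ℝ (closure (ψ ⁻¹' s)) = ⊤ :=
    top_le_iff.1 (hspan ▸ affineSpan_mono ℝ subset_closure)
  rw [← hψs, ψ.isometry.isClosedEmbedding.closure_image_eq,
    ψ.intrinsicInterior_image_of_affineSpan_eq_top hspan',
    ψ.intrinsicInterior_image_of_affineSpan_eq_top hspan,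
    hw.interior_closure_eq_interior_of_nonempty_interior
      (hw.interior_nonempty_iff_affineSpan_eq_top.2 hspan)]

theorem Convex.closure_intrinsicInterior (hs : Convex ℝ s) :
    closure (intrinsicInterior ℝ s) = closure s := by
  rcases s.eq_empty_or_nonempty with rfl | hne
  · simp
  obtain ⟨ψ, hψs, hspan⟩ := exists_affineIsometry_image_preimage_eq_and_affineSpan_eq_top hne
  have hw : Convex ℝ (ψ ⁻¹' s) := hs.affine_preimage ψ.toAffineMap
  rw [← hψs, ψ.intrinsicInterior_image_of_affineSpan_eq_top hspan,
    ψ.isometry.isClosedEmbedding.closure_image_eq, ψ.isometry.isClosedEmbedding.closure_image_eq,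
    hw.closure_interior_eq_closure_of_nonempty_interior
      (hw.interior_nonempty_iff_affineSpan_eq_top.2 hspan)]

end IntrinsicInterior

section PolarCone

variable {F : Type*} [NormedAddCommGroup F] [InnerProductSpace ℝ F]

theorem isClosed_polarCone (s : Set F) : IsClosed (polarCone s) := by
  rw [show polarCone s = ⋂ x ∈ s, {y | ⟪x, y⟫ ≤ 0} by ext; simp [polarCone]]
  exact isClosed_biInter fun x _ => isClosed_le (continuous_const.inner continuous_id)
    continuous_const

theorem polarCone_closure (s : Set F) : polarCone (closure s) = polarCone s := by
  refine subset_antisymm (fun y hy x hx => hy x (subset_closure hx)) fun y hy x hx => ?_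
  exact closure_minimal (t := {x | ⟪x, y⟫ ≤ 0}) hy
    (isClosed_le (continuous_id.inner continuous_const) continuous_const) hx

theorem Convex.polarCone_intrinsicInterior [FiniteDimensional ℝ F] {s : Set F} (hs : Convex ℝ s) :
    polarCone (intrinsicInterior ℝ s) = polarCone s := by
  rw [← polarCone_closure, hs.closure_intrinsicInterior, polarCone_closure]

end PolarCone

section RecessionAndBarrierCones

variable {F : Type*} [NormedAddCommGroup F] [InnerProductSpace ℝ F]

def recessionCone (S : Set F) : Set F :=
  {r | ∀ x ∈ S, ∀ μ : ℝ, 0 ≤ μ → x + μ • r ∈ S}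

def barrierCone (S : Set F) : ConvexCone ℝ F where
  carrier := {c | BddAbove ((fun x => ⟪c, x⟫) '' S)}
  smul_mem' := by
    rintro t ht c ⟨M, hM⟩
    refine ⟨t * M, forall_mem_image.2 fun x hx => ?_⟩
    rw [real_inner_smul_left]
    exact mul_le_mul_of_nonneg_left (hM (mem_image_of_mem _ hx)) ht.le
  add_mem' := by
    rintro c₁ ⟨M₁, hM₁⟩ c₂ ⟨M₂, hM₂⟩
    refine ⟨M₁ + M₂, forall_mem_image.2 fun x hx => ?_⟩
    rw [inner_add_left]
    exact add_le_add (hM₁ (mem_image_of_mem _ hx)) (hM₂ (mem_image_of_mem _ hx))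

theorem zero_mem_barrierCone (S : Set F) : (0 : F) ∈ barrierCone S :=
  ⟨0, forall_mem_image.2 fun x _ => by simp⟩

theorem isClosed_recessionCone {S : Set F} (hS : IsClosed S) : IsClosed (recessionCone S) := by
  rw [show recessionCone S = ⋂ x ∈ S, ⋂ μ ∈ Ici (0 : ℝ), {r | x + μ • r ∈ S} by
    ext; simp [recessionCone]]
  exact isClosed_biInter fun x _ => isClosed_biInter fun μ _ =>
    hS.preimage (continuous_const.add (continuous_const_smul μ))

theorem Convex.recessionCone {S : Set F} (hS : Convex ℝ S) : Convex ℝ (recessionCone S) := by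
  intro r₁ h₁ r₂ h₂ a b ha hb hab x hx μ hμ
  have : x + μ • (a • r₁ + b • r₂) = a • (x + μ • r₁) + b • (x + μ • r₂) := by
    rw [smul_add, smul_add, smul_add, ← add_add_add_comm, ← add_smul, hab, one_smul,
      smul_comm μ a, smul_comm μ b]
  rw [this]
  exact hS (h₁ x hx μ hμ) (h₂ x hx μ hμ) ha hb hab

theorem barrierCone_subset_polarCone_recessionCone {S : Set F} (hS : S.Nonempty) :
    (barrierCone S : Set F) ⊆ polarCone (recessionCone S) := by
  rintro c ⟨M, hM⟩ r hr
  obtain ⟨x, hx⟩ := hS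
  by_contra! hrc
  set μ := (M - ⟪c, x⟫ + 1) / ⟪r, c⟫
  have hxM : ⟪c, x⟫ ≤ M := hM (mem_image_of_mem _ hx)
  have hμr : ⟪c, x + μ • r⟫ ≤ M := hM (mem_image_of_mem _ (hr x hx μ (by positivity)))
  have hμ : μ * ⟪r, c⟫ = M - ⟪c, x⟫ + 1 := div_mul_cancel₀ _ hrc.ne'
  rw [inner_add_right, real_inner_smul_right, real_inner_comm r c] at hμr
  linarith

variable [CompleteSpace F] {S : Set F}

theorem polarCone_barrierCone_subset_recessionCone (hScl : IsClosed S) (hSconv : Convex ℝ S) :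
    polarCone (barrierCone S) ⊆ recessionCone S := by
  intro r hr x hx μ hμ
  by_contra hxr
  obtain ⟨f, u, hfS, hfu⟩ := geometric_hahn_banach_closed_point hSconv hScl hxr
  set c := (InnerProductSpace.toDual ℝ F).symm f
  have hc (y : F) : ⟪c, y⟫ = f y := InnerProductSpace.toDual_symm_apply
  have hcB : c ∈ barrierCone S :=
    ⟨u, forall_mem_image.2 fun y hy => (hc y).trans_le (hfS y hy).le⟩
  have hcr : ⟪c, r⟫ ≤ 0 := hr c hcB
  have hcx : ⟪c, x⟫ < u := (hc x).trans_lt (hfS x hx)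
  rw [← hc, inner_add_right, real_inner_smul_right] at hfu
  nlinarith

theorem closure_barrierCone (hSne : S.Nonempty) (hScl : IsClosed S) (hSconv : Convex ℝ S) :
    closure (barrierCone S : Set F) = polarCone (recessionCone S) := by
  refine subset_antisymm (closure_minimal (barrierCone_subset_polarCone_recessionCone hSne)
    (isClosed_polarCone _)) fun c hc => ?_
  by_contra hcB
  let C : ProperCone ℝ F :=
    ⟨(barrierCone S).closure.toPointedCone (subset_closure (zero_mem_barrierCone S)),
      isClosed_closure⟩
  obtain ⟨y, hyC, hyc⟩ := C.hyperplane_separation' hcB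
  have hy : -y ∈ recessionCone S :=
    polarCone_barrierCone_subset_recessionCone hScl hSconv fun b hb => by
      rw [inner_neg_right, neg_nonpos]
      exact hyC b (subset_closure hb)
  have hcy := hc (-y) hy
  rw [inner_neg_left, real_inner_comm] at hcy
  linarith

end RecessionAndBarrierCones

theorem stmt17 (S : Set E) (hSne : S.Nonempty) (hScl : IsClosed S) (hSconv : Convex ℝ S) :
    intrinsicInterior ℝ {c : E | BddAbove ((fun x => ⟪c, x⟫) '' S)} =
      intrinsicInterior ℝ (polarCone {r : E | ∀ x ∈ S, ∀ μ : ℝ, 0 ≤ μ → x + μ • r ∈ S}) ∧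
    intrinsicInterior ℝ (polarCone {r : E | ∀ x ∈ S, ∀ μ : ℝ, 0 ≤ μ → x + μ • r ∈ S}) ⊆
      {c : E | BddAbove ((fun x => ⟪c, x⟫) '' S)} ∧
    {c : E | BddAbove ((fun x => ⟪c, x⟫) '' S)} ⊆
      polarCone {r : E | ∀ x ∈ S, ∀ μ : ℝ, 0 ≤ μ → x + μ • r ∈ S} ∧
    polarCone {r : E | ∀ x ∈ S, ∀ μ : ℝ, 0 ≤ μ → x + μ • r ∈ S} =
      polarCone (intrinsicInterior ℝ {r : E | ∀ x ∈ S, ∀ μ : ℝ, 0 ≤ μ → x + μ • r ∈ S}) ∧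
    polarCone {r : E | ∀ x ∈ S, ∀ μ : ℝ, 0 ≤ μ → x + μ • r ∈ S} =
      closure {c : E | BddAbove ((fun x => ⟪c, x⟫) '' S)} := by
  have hK : polarCone (recessionCone S) = closure (barrierCone S : Set E) :=
    (closure_barrierCone hSne hScl hSconv).symm
  have hrelint : intrinsicInterior ℝ (barrierCone S : Set E) =
      intrinsicInterior ℝ (polarCone (recessionCone S)) := by
    rw [hK, (barrierCone S).convex.intrinsicInterior_closure]
  refine ⟨hrelint, hrelint ▸ intrinsicInterior_subset,
    barrierCone_subset_polarCone_recessionCone hSne,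
    hSconv.recessionCone.polarCone_intrinsicInterior.symm, hK⟩
end
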